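/- Extrema of the Ising fixed points at the 2D critical coupling (calculus content of Proposition 4): define f(t) = e^t·cosh(t)/(1 + sinh(2t)) and g(t) = e^{−t}·sinh(t)/(1 + sinh(2t)) for t > 0, and let t_c = (1/2)·ln(1+√2). Then for every t > 0 one has f(t) ≥ (2+√2)/4 and g(t) ≤ (2−√2)/4, and at t = t_c equality holds: f(t_c) = (2+√2)/4 and g(t_c) = (2−√2)/4. -/

import Mathlib

/-!
The two fixed points form a probability vector, since
`e^t cosh t + e^{-t} sinh t = 1 + sinh 2t`; so it suffices to bound `π*(1)`.
In the variable `u = e^{2t} - 1` one has `π*(1) = u / (u² + 4u + 2)`, i.e.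
`1 / π*(1) = u + 4 + 2 / u ≥ 4 + 2√2` by AM–GM, with equality exactly at `u = √2`,
which is `t = t_c`.
-/

/-- The fixed point `π*(0) = e^t·cosh(t)/(1 + sinh(2t))` of the Ising marginal mapping. -/
noncomputable def isingFixed0 (t : ℝ) : ℝ :=
  Real.exp t * Real.cosh t / (1 + Real.sinh (2 * t))

/-- The fixed point `π*(1) = e^{−t}·sinh(t)/(1 + sinh(2t))` of the Ising marginal mapping. -/
noncomputable def isingFixed1 (t : ℝ) : ℝ :=
  Real.exp (-t) * Real.sinh t / (1 + Real.sinh (2 * t))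

open Real

lemma exp_mul_cosh_add_exp_neg_mul_sinh (t : ℝ) :
    exp t * cosh t + exp (-t) * sinh t = 1 + sinh (2 * t) := by
  have hexp : exp (2 * t) = exp t ^ 2 := by rw [two_mul, exp_add, sq]
  have hE : exp t ≠ 0 := (exp_pos t).ne'
  rw [cosh_eq, sinh_eq, sinh_eq, exp_neg, exp_neg, hexp]
  field_simp
  ring

lemma one_add_sinh_two_mul_pos {t : ℝ} (ht : 0 ≤ t) : 0 < 1 + sinh (2 * t) := by
  have : 0 ≤ sinh (2 * t) := sinh_nonneg_iff.mpr (by positivity)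
  linarith

lemma isingFixed0_add_isingFixed1 {t : ℝ} (h : 1 + sinh (2 * t) ≠ 0) :
    isingFixed0 t + isingFixed1 t = 1 := by
  rw [isingFixed0, isingFixed1, ← add_div, exp_mul_cosh_add_exp_neg_mul_sinh, div_self h]

lemma isingFixed1_eq (t : ℝ) :
    isingFixed1 t = (exp (2 * t) - 1) /
      ((exp (2 * t) - 1) ^ 2 + 4 * (exp (2 * t) - 1) + 2) := by
  have hexp : exp (2 * t) = exp t ^ 2 := by rw [two_mul, exp_add, sq]
  have hE : exp t ≠ 0 := (exp_pos t).ne'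
  rw [isingFixed1, sinh_eq, sinh_eq, exp_neg, exp_neg, hexp]
  field_simp
  ring

lemma div_sq_add_four_mul_add_two_le {u : ℝ} (hu : 0 ≤ u) :
    u / (u ^ 2 + 4 * u + 2) ≤ (2 - √2) / 4 := by
  have h2 : √2 ^ 2 = 2 := sq_sqrt zero_le_two
  have hsqrt : √2 < 2 := by nlinarith [sqrt_nonneg 2]
  rw [div_le_div_iff₀ (by positivity) four_pos]
  -- `(2 - √2) (u² + 4u + 2) - 4u = (2 - √2) (u - √2)²`
  nlinarith [mul_nonneg (sub_nonneg.mpr hsqrt.le) (sq_nonneg (u - √2))]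

lemma sqrt_two_div_sq_add_four_mul_add_two :
    √2 / (√2 ^ 2 + 4 * √2 + 2) = (2 - √2) / 4 := by
  have h2 : √2 ^ 2 = 2 := sq_sqrt zero_le_two
  rw [div_eq_div_iff (by positivity) four_ne_zero]
  linear_combination (√2 + 2) * h2

lemma exp_two_mul_log_one_add_sqrt_two_div_two :
    exp (2 * (log (1 + √2) / 2)) = 1 + √2 := by
  rw [mul_div_cancel₀ _ two_ne_zero, exp_log (by positivity)]

/-- Proposition 4 (calculus content): on `t > 0`, `π*(0) ≥ (2+√2)/4` and `π*(1) ≤ (2−√2)/4`,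
with equality at the 2D Ising critical coupling `t_c = ln(1+√2)/2`. -/
theorem ising_fixed_point_extrema :
    (∀ t : ℝ, 0 < t →
      (2 + Real.sqrt 2) / 4 ≤ isingFixed0 t ∧ isingFixed1 t ≤ (2 - Real.sqrt 2) / 4) ∧
    isingFixed0 (Real.log (1 + Real.sqrt 2) / 2) = (2 + Real.sqrt 2) / 4 ∧
    isingFixed1 (Real.log (1 + Real.sqrt 2) / 2) = (2 - Real.sqrt 2) / 4 := by
  have hsum : ∀ t : ℝ, 0 ≤ t → isingFixed0 t = 1 - isingFixed1 t := fun t ht =>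
    eq_sub_of_add_eq (isingFixed0_add_isingFixed1 (one_add_sinh_two_mul_pos ht).ne')
  have hcrit : isingFixed1 (log (1 + √2) / 2) = (2 - √2) / 4 := by
    rw [isingFixed1_eq, exp_two_mul_log_one_add_sqrt_two_div_two, add_sub_cancel_left,
      sqrt_two_div_sq_add_four_mul_add_two]
  have htc : 0 ≤ log (1 + √2) / 2 :=
    div_nonneg (log_nonneg (le_add_of_nonneg_right (sqrt_nonneg 2))) zero_le_two
  refine ⟨fun t ht => ?_, ?_, hcrit⟩
  · have hle : isingFixed1 t ≤ (2 - √2) / 4 := by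
      rw [isingFixed1_eq]
      exact div_sq_add_four_mul_add_two_le (sub_nonneg.mpr (one_le_exp (by positivity)))
    refine ⟨?_, hle⟩
    rw [hsum t ht.le]
    linarith
  · rw [hsum _ htc, hcrit]
    ring
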